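/- arXiv:2211.12070 — 5 statements merged into one kernel-verified Lean document; each statement's English description precedes it below -/
import Mathlib

section
/- Let Γ be a symmetric positive-definite real p×p matrix and let N be a symmetric positive semi-definite real p×p matrix. Then I_p + ΓN is invertible and the map x ↦ (I_p + ΓN)⁻¹x is a contraction in the Γ⁻¹-weighted norm: for all x ∈ ℝᵖ, ((I_p+ΓN)⁻¹x)ᵀ Γ⁻¹ ((I_p+ΓN)⁻¹x) ≤ xᵀΓ⁻¹x; equivalently, Γ⁻¹ − (I_p+ΓN)⁻ᵀ Γ⁻¹ (I_p+ΓN)⁻¹ is positive semi-definite. -/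
open Matrix

/-!
With `B = 1 + Γ N`, a direct expansion gives `Bᵀ Γ⁻¹ B = Γ⁻¹ + (2 N + N Γ N)`, so `B` only
enlarges the `Γ⁻¹`-form. Conjugating by `B⁻¹` turns this into
`Γ⁻¹ - B⁻ᵀ Γ⁻¹ B⁻¹ = B⁻ᵀ (2 N + N Γ N) B⁻¹ ⪰ 0`, which is the contraction property.
Invertibility of `B` comes from the factorisation `B = Γ (Γ⁻¹ + N)` with `Γ⁻¹ + N ≻ 0`.
-/

namespace Matrix

variable {n : Type*} [Fintype n]

theorem PosSemidef.sub_transpose_inv_mul_mul_inv [DecidableEq n] {G B : Matrix n n ℝ}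
    (hB : IsUnit B) (h : (Bᵀ * G * B - G).PosSemidef) :
    (G - (B⁻¹)ᵀ * G * B⁻¹).PosSemidef := by
  have hBinv : B * B⁻¹ = 1 := mul_nonsing_inv B ((isUnit_iff_isUnit_det B).mp hB)
  have hBinvt : (B⁻¹)ᵀ * Bᵀ = 1 := by rw [← transpose_mul, hBinv, transpose_one]
  have hconj : G - (B⁻¹)ᵀ * G * B⁻¹ = (B⁻¹)ᵀ * (Bᵀ * G * B - G) * B⁻¹ := by
    calc G - (B⁻¹)ᵀ * G * B⁻¹
        = ((B⁻¹)ᵀ * Bᵀ) * G * (B * B⁻¹) - (B⁻¹)ᵀ * G * B⁻¹ := by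
          rw [hBinvt, hBinv, one_mul, mul_one]
      _ = (B⁻¹)ᵀ * (Bᵀ * G * B - G) * B⁻¹ := by
          simp only [Matrix.mul_sub, Matrix.sub_mul, Matrix.mul_assoc]
  rw [hconj]
  simpa [conjTranspose_eq_transpose_of_trivial] using h.conjTranspose_mul_mul_same B⁻¹

theorem PosSemidef.dotProduct_mulVec_mulVec_le {G A : Matrix n n ℝ}
    (h : (G - Aᵀ * G * A).PosSemidef) (x : n → ℝ) :
    (A *ᵥ x) ⬝ᵥ (G *ᵥ (A *ᵥ x)) ≤ x ⬝ᵥ (G *ᵥ x) := by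
  have hx := h.dotProduct_mulVec_nonneg x
  rw [star_trivial, sub_mulVec, dotProduct_sub, ← mulVec_mulVec, ← mulVec_mulVec,
    dotProduct_mulVec x Aᵀ, vecMul_transpose] at hx
  linarith

theorem one_add_mul_eq_mul_inv_add [DecidableEq n] {Γ N : Matrix n n ℝ} (hΓ : IsUnit Γ) :
    1 + Γ * N = Γ * (Γ⁻¹ + N) := by
  rw [mul_add, mul_nonsing_inv Γ ((isUnit_iff_isUnit_det Γ).mp hΓ)]

theorem PosDef.isUnit_one_add_mul [DecidableEq n] {Γ N : Matrix n n ℝ} (hΓ : Γ.PosDef)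
    (hN : N.PosSemidef) : IsUnit (1 + Γ * N) := by
  rw [one_add_mul_eq_mul_inv_add hΓ.isUnit]
  exact hΓ.isUnit.mul (hΓ.inv.add_posSemidef hN).isUnit

theorem transpose_one_add_mul_mul_inv_mul_sub_inv [DecidableEq n] {Γ N : Matrix n n ℝ}
    (hΓ : IsUnit Γ) (hΓt : Γᵀ = Γ) (hNt : Nᵀ = N) :
    (1 + Γ * N)ᵀ * Γ⁻¹ * (1 + Γ * N) - Γ⁻¹ = N + N + N * Γ * N := by
  have hdet := (isUnit_iff_isUnit_det Γ).mp hΓ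
  rw [transpose_add, transpose_one, transpose_mul, hΓt, hNt, add_mul, one_mul,
    Matrix.mul_assoc N, mul_nonsing_inv Γ hdet, mul_one, add_mul, mul_add, mul_add, mul_one,
    mul_one, ← Matrix.mul_assoc Γ⁻¹, nonsing_inv_mul Γ hdet, one_mul, ← Matrix.mul_assoc N Γ N]
  abel

theorem PosSemidef.add_add_mul_mul {Γ N : Matrix n n ℝ} (hΓ : Γ.PosSemidef)
    (hN : N.PosSemidef) : (N + N + N * Γ * N).PosSemidef := by
  have hNt : Nᵀ = N := hN.isHermitian
  have hΓN : (N * Γ * N).PosSemidef := by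
    simpa [conjTranspose_eq_transpose_of_trivial, hNt] using hΓ.mul_mul_conjTranspose_same N
  exact (hN.add hN).add hΓN

end Matrix

/-- For `Γ` symmetric positive definite and `N` symmetric positive
semi-definite, `I + Γ N` is invertible and `x ↦ (I + Γ N)⁻¹ x` is a contraction in the
`Γ⁻¹`-weighted norm: for all `x`,
`((I+ΓN)⁻¹x)ᵀ Γ⁻¹ ((I+ΓN)⁻¹x) ≤ xᵀ Γ⁻¹ x`; equivalently,
`Γ⁻¹ − ((I+ΓN)⁻¹)ᵀ Γ⁻¹ (I+ΓN)⁻¹` is positive semi-definite. -/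
theorem stmt5 {p : ℕ} (Γ N : Matrix (Fin p) (Fin p) ℝ)
    (hΓ : Γ.PosDef) (hN : N.PosSemidef) :
    IsUnit (1 + Γ * N) ∧
    (∀ x : Fin p → ℝ,
      ((1 + Γ * N)⁻¹ *ᵥ x) ⬝ᵥ (Γ⁻¹ *ᵥ ((1 + Γ * N)⁻¹ *ᵥ x)) ≤ x ⬝ᵥ (Γ⁻¹ *ᵥ x)) ∧
    (Γ⁻¹ - ((1 + Γ * N)⁻¹)ᵀ * Γ⁻¹ * (1 + Γ * N)⁻¹).PosSemidef := by
  have hunit : IsUnit (1 + Γ * N) := hΓ.isUnit_one_add_mul hN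
  have hgain : ((1 + Γ * N)ᵀ * Γ⁻¹ * (1 + Γ * N) - Γ⁻¹).PosSemidef := by
    rw [transpose_one_add_mul_mul_inv_mul_sub_inv (N := N) hΓ.isUnit hΓ.isHermitian
      hN.isHermitian]
    exact hΓ.posSemidef.add_add_mul_mul hN
  have hcontract := hgain.sub_transpose_inv_mul_mul_inv hunit
  exact ⟨hunit, hcontract.dotProduct_mulVec_mulVec_le, hcontract⟩
end

section
/- Let R be a symmetric positive-definite real q×q matrix, let 0 < k_min < k₀ be real constants, and let (φ_t)_{t≥1} be any sequence of real p×q matrices. Define the covariance-resetting sequence: Γ₀ = k₀·I_p, and for t ≥ 1, Γ̄_t = Γ_{t−1} − Γ_{t−1}φ_t(R + φ_tᵀΓ_{t−1}φ_t)⁻¹φ_tᵀΓ_{t−1}, with Γ_t = k₀·I_p if λ_min[Γ̄_t] ≤ k_min, and Γ_t = Γ̄_t otherwise. Then for every t ≥ 0: Γ_t is symmetric positive definite, k₀·I_p − Γ_t is positive semi-definite (i.e., λ_max[Γ_t] ≤ k₀), and Γ_t − k_min·I_p is positive definite (i.e., λ_min[Γ_t] > k_min). -/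
/-!
The correction `Γφ(R + φᵀΓφ)⁻¹φᵀΓ` subtracted by the least-squares update is a congruence of
the inverse of the positive semidefinite matrix `R + φᵀΓφ`, hence positive semidefinite. So the
update can only shrink `Γ`, and `Γ ≤ k₀ I` propagates. The lower bound `Γ > k_min I` is enforced
by the reset rule itself: `Γ̄_t` is kept only when all of its eigenvalues exceed `k_min`, and
otherwise it is replaced by `k₀ I`, which satisfies both bounds.
-/

open Matrix
open scoped Pointwise

/-- The smallest eigenvalue of a (symmetric) real matrix, realized as the infimum of its
real spectrum. -/
noncomputable def lambdaMin {p : ℕ} (M : Matrix (Fin p) (Fin p) ℝ) : ℝ :=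
  sInf (spectrum ℝ M)

namespace Matrix

lemma posDef_of_posDef_sub_smul_one {n : Type*} [DecidableEq n] {M : Matrix n n ℝ} {c : ℝ}
    (hc : 0 ≤ c) (h : (M - c • (1 : Matrix n n ℝ)).PosDef) : M.PosDef := by
  simpa using h.add_posSemidef (PosSemidef.one.smul hc)

lemma posDef_sub_smul_one_of_lt_lambdaMin {p : ℕ} {M : Matrix (Fin p) (Fin p) ℝ}
    (hM : M.IsHermitian) {c : ℝ} (hc : c < lambdaMin M) :
    (M - c • (1 : Matrix (Fin p) (Fin p) ℝ)).PosDef := by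
  have hN : (M - c • (1 : Matrix (Fin p) (Fin p) ℝ)).IsHermitian :=
    hM.sub (isHermitian_one.smul (.all c))
  refine hN.posDef_iff_eigenvalues_pos.mpr fun i => ?_
  have hmem : hN.eigenvalues i ∈ spectrum ℝ M - ({c} : Set ℝ) := by
    rw [spectrum.sub_singleton_eq, Algebra.algebraMap_eq_smul_one]
    exact hN.eigenvalues_mem_spectrum_real i
  obtain ⟨μ, hμ, c', rfl, hEq⟩ := hmem
  rw [← hEq, sub_pos]
  exact hc.trans_le (csInf_le (finite_spectrum M).bddBelow hμ)

variable {m n : Type*} [Fintype m] [Fintype n] [DecidableEq n]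

noncomputable def covarianceCorrection (R : Matrix n n ℝ) (φ : Matrix m n ℝ)
    (Γ : Matrix m m ℝ) : Matrix m m ℝ :=
  Γ * φ * (R + φᵀ * Γ * φ)⁻¹ * φᵀ * Γ

lemma posSemidef_covarianceCorrection {R : Matrix n n ℝ} {Γ : Matrix m m ℝ}
    (φ : Matrix m n ℝ) (hR : R.PosSemidef) (hΓ : Γ.PosSemidef) :
    (covarianceCorrection R φ Γ).PosSemidef := by
  have hS : (R + φᵀ * Γ * φ).PosSemidef := hR.add (hΓ.conjTranspose_mul_mul_same φ)
  have hΓT : Γᵀ = Γ := (conjTranspose_eq_transpose_of_trivial Γ).symm.trans hΓ.isHermitian.eq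
  rw [covarianceCorrection]
  simpa only [conjTranspose_eq_transpose_of_trivial, transpose_mul, hΓT, Matrix.mul_assoc] using
    hS.inv.mul_mul_conjTranspose_same (Γ * φ)

end Matrix

def CovarianceBounds {p : ℕ} (kmin k₀ : ℝ) (Γ : Matrix (Fin p) (Fin p) ℝ) : Prop :=
  Γ.PosDef ∧ (k₀ • (1 : Matrix (Fin p) (Fin p) ℝ) - Γ).PosSemidef ∧
    (Γ - kmin • (1 : Matrix (Fin p) (Fin p) ℝ)).PosDef

namespace CovarianceBounds

variable {p : ℕ} {kmin k₀ : ℝ}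

lemma smul_one (hkmin : 0 ≤ kmin) (hk : kmin < k₀) :
    CovarianceBounds kmin k₀ (k₀ • (1 : Matrix (Fin p) (Fin p) ℝ)) := by
  have hlow : (k₀ • (1 : Matrix (Fin p) (Fin p) ℝ) - kmin • 1).PosDef := by
    rw [← sub_smul]
    exact PosDef.one.smul (sub_pos.mpr hk)
  refine ⟨posDef_of_posDef_sub_smul_one hkmin hlow, ?_, hlow⟩
  rw [sub_self]
  exact PosSemidef.zero

lemma sub_covarianceCorrection {n : Type*} [Fintype n] [DecidableEq n]
    {R : Matrix n n ℝ} {Γ : Matrix (Fin p) (Fin p) ℝ} (hR : R.PosSemidef) (hkmin : 0 ≤ kmin)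
    (hΓ : CovarianceBounds kmin k₀ Γ) (φ : Matrix (Fin p) n ℝ)
    (hmin : kmin < lambdaMin (Γ - covarianceCorrection R φ Γ)) :
    CovarianceBounds kmin k₀ (Γ - covarianceCorrection R φ Γ) := by
  obtain ⟨hpos, hupper, -⟩ := hΓ
  have hK := posSemidef_covarianceCorrection φ hR hpos.posSemidef
  have hlow := posDef_sub_smul_one_of_lt_lambdaMin (hpos.isHermitian.sub hK.isHermitian) hmin
  refine ⟨posDef_of_posDef_sub_smul_one hkmin hlow, ?_, hlow⟩
  rw [sub_sub_eq_add_sub, ← sub_add_eq_add_sub]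
  exact hupper.add hK

end CovarianceBounds

/-- The covariance-resetting RLS covariance sequence
`Γ₀ = k₀ I`, `Γ̄_t = Γ_{t−1} − Γ_{t−1}φ_t(R + φ_tᵀΓ_{t−1}φ_t)⁻¹φ_tᵀΓ_{t−1}`,
`Γ_t = k₀ I` if `λ_min[Γ̄_t] ≤ k_min`, else `Γ_t = Γ̄_t`, is symmetric positive definite
for every `t`, with `λ_max[Γ_t] ≤ k₀` (i.e. `k₀ I − Γ_t ⪰ 0`) and `λ_min[Γ_t] > k_min`
(i.e. `Γ_t − k_min I ≻ 0`). -/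
theorem stmt10 {p q : ℕ} (R : Matrix (Fin q) (Fin q) ℝ) (hR : R.PosDef)
    (kmin k₀ : ℝ) (hkmin : 0 < kmin) (hk : kmin < k₀)
    (φ : ℕ → Matrix (Fin p) (Fin q) ℝ)
    (Γ Γbar : ℕ → Matrix (Fin p) (Fin p) ℝ)
    (hΓ0 : Γ 0 = k₀ • (1 : Matrix (Fin p) (Fin p) ℝ))
    (hbar : ∀ t : ℕ, Γbar (t + 1) =
      Γ t - Γ t * φ (t + 1) * (R + (φ (t + 1))ᵀ * Γ t * φ (t + 1))⁻¹ * (φ (t + 1))ᵀ * Γ t)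
    (hreset : ∀ t : ℕ, Γ (t + 1) =
      if lambdaMin (Γbar (t + 1)) ≤ kmin then k₀ • (1 : Matrix (Fin p) (Fin p) ℝ)
      else Γbar (t + 1)) :
    ∀ t : ℕ, (Γ t).PosDef ∧
      (k₀ • (1 : Matrix (Fin p) (Fin p) ℝ) - Γ t).PosSemidef ∧
      (Γ t - kmin • (1 : Matrix (Fin p) (Fin p) ℝ)).PosDef := by
  intro t
  induction t with
  | zero =>
    rw [hΓ0]
    exact CovarianceBounds.smul_one hkmin.le hk
  | succ t ih =>
    rw [hreset t]
    split_ifs with hmin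
    · exact CovarianceBounds.smul_one hkmin.le hk
    · rw [hbar t] at hmin ⊢
      exact CovarianceBounds.sub_covarianceCorrection hR.posSemidef hkmin.le ih (φ (t + 1))
        (not_le.mp hmin)
end

section
/- (Boundedness of the adaptive-observer parameter estimation error, Theorem 4.) Let R be a symmetric positive-definite real q×q matrix, 0 < k_min < k₀ real constants, (φ_t)_{t≥1} a bounded sequence of real p×q matrices, C a real q×n matrix, x̃₀ ∈ ℝⁿ, and F a real n×n matrix such that ‖Fᵏ‖ ≤ M·cᵏ for all k ≥ 0 with constants M ≥ 0 and 0 ≤ c < 1. Define Γ₀ = k₀·I_p and for t ≥ 1: Γ̄_t = Γ_{t−1} − Γ_{t−1}φ_t W_t φ_tᵀΓ_{t−1} with W_t = (R + φ_tᵀΓ_{t−1}φ_t)⁻¹, and Γ_t = k₀·I_p if λ_min[Γ̄_t] ≤ k_min and Γ_t = Γ̄_t otherwise. Let (p̃_t)_{t≥0} satisfy p̃_{t+1} = p̃_t − Γ_t φ_{t+1} W_{t+1} (φ_{t+1}ᵀ p̃_t + C F^{t+1} x̃₀) for all t ≥ 0, with arbitrary p̃₀ ∈ ℝᵖ. Then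 the sequence (p̃_t) is bounded: there exists β < ∞ with ‖p̃_t‖ ≤ β for all t ≥ 0. -/
open Matrix
open scoped Matrix.Norms.L2Operator

/-- The Euclidean norm of a vector in `ℝᵏ`. -/
noncomputable def evnorm {k : ℕ} (v : Fin k → ℝ) : ℝ :=
  ‖(EuclideanSpace.equiv (Fin k) ℝ).symm v‖

/-!
Along the covariance-resetting RLS recursion, `Γ_t` stays positive definite with `Γ_t ≤ k₀ I`.
By the Woodbury identity the un-reset update is `Γ̄ = (Γ⁻¹ + φR⁻¹φᵀ)⁻¹ ≤ Γ`, and the error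
recursion reads `p̃' = Γ̄ (Γ⁻¹ p̃ − φR⁻¹η)` with disturbance `η_t = C F^{t+1} x̃₀`. Hence the
weighted norm `√(p̃ᵀ Γ⁻¹ p̃)` can grow at step `t` by at most `√k₀ ‖φR⁻¹η_t‖`, whether or not the
covariance is reset (a reset replaces `Γ̄⁻¹` by `k₀⁻¹ I`, and `‖Γ̄z‖² ≤ k₀ zᵀΓ̄z`), and these
increments decay geometrically. Finally `‖p̃‖ ≤ √k₀ √(p̃ᵀ Γ⁻¹ p̃)` since `Γ ≤ k₀ I`.
-/

lemma le_add_tsum_of_succ_le_add {w u : ℕ → ℝ} (hu : Summable u) (hu0 : ∀ t, 0 ≤ u t)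
    (h : ∀ t, w (t + 1) ≤ w t + u t) (t : ℕ) : w t ≤ w 0 + ∑' i, u i := by
  have hsum : ∑ i ∈ Finset.range t, (w (i + 1) - w i) ≤ ∑ i ∈ Finset.range t, u i :=
    Finset.sum_le_sum fun i _ => sub_le_iff_le_add'.mpr (h i)
  rw [Finset.sum_range_sub] at hsum
  linarith [hu.sum_le_tsum (Finset.range t) fun i _ => hu0 i]

open scoped MatrixOrder

namespace Matrix

variable {m l : Type*} [Fintype m] [Fintype l]

lemma sqrt_dotProduct_self (v : m → ℝ) :
    √(v ⬝ᵥ v) = ‖(EuclideanSpace.equiv m ℝ).symm v‖ := by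
  rw [EuclideanSpace.norm_eq]
  simp [dotProduct, sq]

lemma dotProduct_mulVec_mono {A B : Matrix m m ℝ} (h : A ≤ B) (x : m → ℝ) :
    x ⬝ᵥ A *ᵥ x ≤ x ⬝ᵥ B *ᵥ x := by
  have := (le_iff.mp h).dotProduct_mulVec_nonneg x
  rw [star_trivial, sub_mulVec, dotProduct_sub] at this
  linarith

lemma PosDef.add_transpose_mul_mul {R : Matrix l l ℝ} {G : Matrix m m ℝ} (Φ : Matrix m l ℝ)
    (hR : R.PosDef) (hG : G.PosSemidef) : (R + Φᵀ * G * Φ).PosDef := by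
  refine hR.add_posSemidef ?_
  simpa only [conjTranspose_eq_transpose_of_trivial] using hG.conjTranspose_mul_mul_same Φ

section

variable [DecidableEq m]

lemma dotProduct_smul_one_mulVec (c : ℝ) (x : m → ℝ) :
    x ⬝ᵥ (c • (1 : Matrix m m ℝ)) *ᵥ x = c * (x ⬝ᵥ x) := by
  rw [smul_mulVec, one_mulVec, dotProduct_smul, smul_eq_mul]

namespace PosSemidef

lemma dotProduct_mulVec_eq_sqrt {A : Matrix m m ℝ} (hA : A.PosSemidef) (x : m → ℝ) :
    x ⬝ᵥ A *ᵥ x = (CFC.sqrt A *ᵥ x) ⬝ᵥ (CFC.sqrt A *ᵥ x) := by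
  conv_lhs => rw [← CFC.sqrt_mul_sqrt_self A hA.nonneg]
  rw [← mulVec_mulVec, dotProduct_mulVec, ← mulVec_transpose,
    ← conjTranspose_eq_transpose_of_trivial, (CFC.sqrt_nonneg A).posSemidef.isHermitian.eq]

lemma sqrt_dotProduct_mulVec_sub_le {G : Matrix m m ℝ} (hG : G.PosSemidef) (a b : m → ℝ) :
    √((a - b) ⬝ᵥ G *ᵥ (a - b)) ≤ √(a ⬝ᵥ G *ᵥ a) + √(b ⬝ᵥ G *ᵥ b) := by
  simp only [hG.dotProduct_mulVec_eq_sqrt, sqrt_dotProduct_self]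
  rw [mulVec_sub, map_sub]
  exact norm_sub_le _ _

lemma mulVec_dotProduct_mulVec_le {B : Matrix m m ℝ} {c : ℝ} (hB : B.PosSemidef)
    (hBc : B ≤ c • 1) (x : m → ℝ) :
    (B *ᵥ x) ⬝ᵥ (B *ᵥ x) ≤ c * (x ⬝ᵥ B *ᵥ x) := by
  set y := CFC.sqrt B *ᵥ x
  have hBx : B *ᵥ x = CFC.sqrt B *ᵥ y := by
    rw [mulVec_mulVec, CFC.sqrt_mul_sqrt_self B hB.nonneg]
  calc (B *ᵥ x) ⬝ᵥ (B *ᵥ x) = y ⬝ᵥ B *ᵥ y := by rw [hBx, hB.dotProduct_mulVec_eq_sqrt y]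
    _ ≤ y ⬝ᵥ (c • 1 : Matrix m m ℝ) *ᵥ y := dotProduct_mulVec_mono hBc y
    _ = c * (x ⬝ᵥ B *ᵥ x) := by rw [dotProduct_smul_one_mulVec, hB.dotProduct_mulVec_eq_sqrt]

end PosSemidef

lemma PosDef.sqrt_dotProduct_self_le {G : Matrix m m ℝ} {c : ℝ} (hG : G.PosDef)
    (hGc : G ≤ c • 1) (hc : 0 ≤ c) (x : m → ℝ) :
    √(x ⬝ᵥ x) ≤ √c * √(x ⬝ᵥ G⁻¹ *ᵥ x) := by
  have hx : G *ᵥ (G⁻¹ *ᵥ x) = x := by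
    rw [mulVec_mulVec, mul_nonsing_inv _ hG.det_pos.ne'.isUnit, one_mulVec]
  have := hG.posSemidef.mulVec_dotProduct_mulVec_le hGc (G⁻¹ *ᵥ x)
  rw [hx, dotProduct_comm (G⁻¹ *ᵥ x)] at this
  rw [← Real.sqrt_mul hc]
  exact Real.sqrt_le_sqrt this

end

section RLS

variable [DecidableEq l] {R : Matrix l l ℝ} {G : Matrix m m ℝ} (Φ : Matrix m l ℝ)

-- In the paper's notation `rlsGain R Γ_{t-1} φ_t = Γ_{t-1} φ_t W_t`
-- and `rlsCov R Γ_{t-1} φ_t = Γ̄_t`.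
noncomputable def rlsGain (R : Matrix l l ℝ) (G : Matrix m m ℝ) (Φ : Matrix m l ℝ) :
    Matrix m l ℝ :=
  G * Φ * (R + Φᵀ * G * Φ)⁻¹

noncomputable def rlsCov (R : Matrix l l ℝ) (G : Matrix m m ℝ) (Φ : Matrix m l ℝ) :
    Matrix m m ℝ :=
  G - rlsGain R G Φ * Φᵀ * G

lemma rlsCov_le (hR : R.PosDef) (hG : G.PosSemidef) : rlsCov R G Φ ≤ G := by
  have hW := (PosDef.add_transpose_mul_mul Φ hR hG).inv.posSemidef.mul_mul_conjTranspose_same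
    (G * Φ)
  rw [conjTranspose_eq_transpose_of_trivial, transpose_mul,
    ← conjTranspose_eq_transpose_of_trivial G, hG.isHermitian.eq] at hW
  rw [le_iff, rlsCov, sub_sub_cancel, rlsGain]
  simpa only [Matrix.mul_assoc] using hW

lemma rlsCov_mul_eq_rlsGain_mul (hR : R.PosDef) (hG : G.PosSemidef) :
    rlsCov R G Φ * Φ = rlsGain R G Φ * R := by
  have hS : rlsGain R G Φ * (R + Φᵀ * G * Φ) = G * Φ := nonsing_inv_mul_cancel_right _ _
    (PosDef.add_transpose_mul_mul Φ hR hG).det_pos.ne'.isUnit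
  rw [Matrix.mul_add] at hS
  rw [eq_sub_of_add_eq hS, rlsCov, Matrix.sub_mul]
  simp only [Matrix.mul_assoc]

variable [DecidableEq m]

lemma rlsCov_eq_inv (hR : R.PosDef) (hG : G.PosDef) :
    rlsCov R G Φ = (G⁻¹ + Φ * R⁻¹ * Φᵀ)⁻¹ := by
  have hGG := nonsing_inv_nonsing_inv G hG.det_pos.ne'.isUnit
  have hRR := nonsing_inv_nonsing_inv R hR.det_pos.ne'.isUnit
  rw [add_mul_mul_inv_eq_sub _ _ _ _ hG.inv.isUnit hR.inv.isUnit ?_, hGG, hRR, rlsCov, rlsGain]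
  simpa only [hGG, hRR] using (PosDef.add_transpose_mul_mul Φ hR hG.posSemidef).isUnit

lemma posDef_rlsCov (hR : R.PosDef) (hG : G.PosDef) : (rlsCov R G Φ).PosDef := by
  rw [rlsCov_eq_inv Φ hR hG]
  refine (hG.inv.add_posSemidef ?_).inv
  simpa only [conjTranspose_eq_transpose_of_trivial] using
    hR.inv.posSemidef.mul_mul_conjTranspose_same Φ

lemma rlsCov_mulVec_sub (hR : R.PosDef) (hG : G.PosDef) (x : m → ℝ) (y : l → ℝ) :
    rlsCov R G Φ *ᵥ (G⁻¹ *ᵥ x - (Φ * R⁻¹) *ᵥ y) = x - rlsGain R G Φ *ᵥ (Φᵀ *ᵥ x + y) := by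
  have hGinv : rlsCov R G Φ * G⁻¹ = 1 - rlsGain R G Φ * Φᵀ := by
    rw [rlsCov, Matrix.sub_mul, mul_nonsing_inv_cancel_right _ _ hG.det_pos.ne'.isUnit,
      mul_nonsing_inv _ hG.det_pos.ne'.isUnit]
  have hRinv : rlsCov R G Φ * (Φ * R⁻¹) = rlsGain R G Φ := by
    rw [← Matrix.mul_assoc, rlsCov_mul_eq_rlsGain_mul Φ hR hG.posSemidef,
      mul_nonsing_inv_cancel_right _ _ hR.det_pos.ne'.isUnit]
  rw [mulVec_sub, mulVec_mulVec, mulVec_mulVec, hGinv, hRinv, sub_mulVec, one_mulVec,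
    mulVec_add, mulVec_mulVec]
  abel

variable {k₀ : ℝ}

lemma dotProduct_mulVec_inv_le_of_reset {B G' : Matrix m m ℝ} (hk₀ : 0 < k₀) (hB : B.PosDef)
    (hBk : B ≤ k₀ • 1) (hG' : G' = k₀ • 1 ∨ G' = B) (z : m → ℝ) :
    (B *ᵥ z) ⬝ᵥ G'⁻¹ *ᵥ (B *ᵥ z) ≤ z ⬝ᵥ B *ᵥ z := by
  rcases hG' with rfl | rfl
  · have hinv : (k₀ • (1 : Matrix m m ℝ))⁻¹ = k₀⁻¹ • 1 := inv_eq_left_inv <| by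
      rw [smul_mul_smul_comm, inv_mul_cancel₀ hk₀.ne', Matrix.one_mul, one_smul]
    rw [hinv, dotProduct_smul_one_mulVec, inv_mul_le_iff₀ hk₀]
    exact hB.posSemidef.mulVec_dotProduct_mulVec_le hBk z
  · rw [mulVec_mulVec, nonsing_inv_mul _ hB.det_pos.ne'.isUnit, one_mulVec, dotProduct_comm]

lemma posDef_and_le_of_reset {G' : Matrix m m ℝ} (hR : R.PosDef) (hk₀ : 0 < k₀)
    (hG : G.PosDef) (hGk : G ≤ k₀ • 1) (hG' : G' = k₀ • 1 ∨ G' = rlsCov R G Φ) :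
    G'.PosDef ∧ G' ≤ k₀ • 1 := by
  rcases hG' with rfl | rfl
  · exact ⟨PosDef.one.smul hk₀, le_rfl⟩
  · exact ⟨posDef_rlsCov Φ hR hG, (rlsCov_le Φ hR hG.posSemidef).trans hGk⟩

lemma sqrt_dotProduct_inv_mulVec_rls_le {G' : Matrix m m ℝ} (hR : R.PosDef) (hk₀ : 0 < k₀)
    (hG : G.PosDef) (hGk : G ≤ k₀ • 1) (hG' : G' = k₀ • 1 ∨ G' = rlsCov R G Φ)
    (x : m → ℝ) (y : l → ℝ) :
    √((x - rlsGain R G Φ *ᵥ (Φᵀ *ᵥ x + y)) ⬝ᵥ G'⁻¹ *ᵥ (x - rlsGain R G Φ *ᵥ (Φᵀ *ᵥ x + y))) ≤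
      √(x ⬝ᵥ G⁻¹ *ᵥ x) + √k₀ * √((Φ * R⁻¹) *ᵥ y ⬝ᵥ (Φ * R⁻¹) *ᵥ y) := by
  set a := G⁻¹ *ᵥ x
  set b := (Φ * R⁻¹) *ᵥ y
  have hB := posDef_rlsCov Φ hR hG
  have hBG := rlsCov_le Φ hR hG.posSemidef
  have ha : a ⬝ᵥ G *ᵥ a = x ⬝ᵥ G⁻¹ *ᵥ x := by
    rw [mulVec_mulVec, mul_nonsing_inv _ hG.det_pos.ne'.isUnit, one_mulVec, dotProduct_comm]
  have hb : b ⬝ᵥ G *ᵥ b ≤ k₀ * (b ⬝ᵥ b) :=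
    (dotProduct_mulVec_mono hGk b).trans_eq (dotProduct_smul_one_mulVec k₀ b)
  rw [← rlsCov_mulVec_sub Φ hR hG x y]
  calc _ ≤ √((a - b) ⬝ᵥ rlsCov R G Φ *ᵥ (a - b)) := Real.sqrt_le_sqrt
        (dotProduct_mulVec_inv_le_of_reset hk₀ hB (hBG.trans hGk) hG' (a - b))
    _ ≤ √((a - b) ⬝ᵥ G *ᵥ (a - b)) := Real.sqrt_le_sqrt (dotProduct_mulVec_mono hBG _)
    _ ≤ √(a ⬝ᵥ G *ᵥ a) + √(b ⬝ᵥ G *ᵥ b) := hG.posSemidef.sqrt_dotProduct_mulVec_sub_le a b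
    _ ≤ √(x ⬝ᵥ G⁻¹ *ᵥ x) + √k₀ * √(b ⬝ᵥ b) := by
        rw [ha, ← Real.sqrt_mul hk₀.le]
        gcongr

theorem sqrt_dotProduct_self_le_of_rls_reset {Γ : ℕ → Matrix m m ℝ} {Φ : ℕ → Matrix m l ℝ}
    {x : ℕ → m → ℝ} {y : ℕ → l → ℝ} {u : ℕ → ℝ} (hR : R.PosDef) (hk₀ : 0 < k₀)
    (hΓ0 : Γ 0 = k₀ • 1) (hΓ : ∀ t, Γ (t + 1) = k₀ • 1 ∨ Γ (t + 1) = rlsCov R (Γ t) (Φ (t + 1)))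
    (hx : ∀ t, x (t + 1) = x t - rlsGain R (Γ t) (Φ (t + 1)) *ᵥ ((Φ (t + 1))ᵀ *ᵥ x t + y t))
    (hu : Summable u)
    (hy : ∀ t, √((Φ (t + 1) * R⁻¹) *ᵥ y t ⬝ᵥ (Φ (t + 1) * R⁻¹) *ᵥ y t) ≤ u t) (t : ℕ) :
    √(x t ⬝ᵥ x t) ≤ √k₀ * (√(x 0 ⬝ᵥ (Γ 0)⁻¹ *ᵥ x 0) + √k₀ * ∑' i, u i) := by
  have hΓt : ∀ t, (Γ t).PosDef ∧ Γ t ≤ k₀ • 1 := by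
    intro t
    induction t with
    | zero => rw [hΓ0]; exact ⟨PosDef.one.smul hk₀, le_rfl⟩
    | succ t ih => exact posDef_and_le_of_reset _ hR hk₀ ih.1 ih.2 (hΓ t)
  set w : ℕ → ℝ := fun t => √(x t ⬝ᵥ (Γ t)⁻¹ *ᵥ x t)
  have hstep : ∀ t, w (t + 1) ≤ w t + √k₀ * u t := fun t => by
    simp only [w, hx t]
    exact (sqrt_dotProduct_inv_mulVec_rls_le _ hR hk₀ (hΓt t).1 (hΓt t).2 (hΓ t) _ _).trans
      (by gcongr; exact hy t)
  have hu0 : ∀ t, 0 ≤ √k₀ * u t := fun t =>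
    mul_nonneg (Real.sqrt_nonneg _) ((Real.sqrt_nonneg _).trans (hy t))
  calc √(x t ⬝ᵥ x t) ≤ √k₀ * w t := (hΓt t).1.sqrt_dotProduct_self_le (hΓt t).2 hk₀.le _
    _ ≤ √k₀ * (w 0 + ∑' i, √k₀ * u i) := by
        gcongr
        exact le_add_tsum_of_succ_le_add (hu.mul_left _) hu0 hstep t
    _ = _ := by rw [tsum_mul_left]

end RLS

end Matrix

lemma evnorm_eq_sqrt_dotProduct {k : ℕ} (v : Fin k → ℝ) : evnorm v = √(v ⬝ᵥ v) :=
  (sqrt_dotProduct_self v).symm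

lemma evnorm_mulVec_le {a b : ℕ} (A : Matrix (Fin a) (Fin b) ℝ) (v : Fin b → ℝ) :
    evnorm (A *ᵥ v) ≤ ‖A‖ * evnorm v :=
  l2_opNorm_mulVec A ((EuclideanSpace.equiv (Fin b) ℝ).symm v)

lemma evnorm_mul_mulVec_mul_mulVec_le {a b c d e : ℕ} (A : Matrix (Fin a) (Fin b) ℝ)
    (B : Matrix (Fin b) (Fin c) ℝ) (C : Matrix (Fin c) (Fin d) ℝ) (D : Matrix (Fin d) (Fin e) ℝ)
    (v : Fin e → ℝ) :
    evnorm ((A * B) *ᵥ (C * D) *ᵥ v) ≤ ‖A‖ * ‖B‖ * (‖C‖ * ‖D‖ * evnorm v) := by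
  have hv : 0 ≤ evnorm v := norm_nonneg _
  calc _ ≤ ‖A * B‖ * (‖C * D‖ * evnorm v) :=
        (evnorm_mulVec_le _ _).trans (by gcongr; exact evnorm_mulVec_le _ _)
    _ ≤ _ := by gcongr <;> exact l2_opNorm_mul _ _

theorem stmt13_general {p q n : ℕ} (R : Matrix (Fin q) (Fin q) ℝ) (hR : R.PosDef)
    (kmin k₀ : ℝ) (hkmin : 0 < kmin) (hk : kmin < k₀)
    (φ : ℕ → Matrix (Fin p) (Fin q) ℝ) (hφbdd : ∃ βφ : ℝ, ∀ t : ℕ, ‖φ t‖ ≤ βφ)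
    (C : Matrix (Fin q) (Fin n) ℝ) (xtil0 : Fin n → ℝ)
    (F : Matrix (Fin n) (Fin n) ℝ) (M c : ℝ) (hc0 : 0 ≤ c) (hc1 : c < 1)
    (hF : ∀ k : ℕ, ‖F ^ k‖ ≤ M * c ^ k)
    (Γ Γbar : ℕ → Matrix (Fin p) (Fin p) ℝ) (W : ℕ → Matrix (Fin q) (Fin q) ℝ)
    (hΓ0 : Γ 0 = k₀ • (1 : Matrix (Fin p) (Fin p) ℝ))
    (hW : ∀ t : ℕ, W (t + 1) = (R + (φ (t + 1))ᵀ * Γ t * φ (t + 1))⁻¹)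
    (hbar : ∀ t : ℕ, Γbar (t + 1) = Γ t - Γ t * φ (t + 1) * W (t + 1) * (φ (t + 1))ᵀ * Γ t)
    (hreset : ∀ t : ℕ, Γ (t + 1) =
      if lambdaMin (Γbar (t + 1)) ≤ kmin then k₀ • (1 : Matrix (Fin p) (Fin p) ℝ)
      else Γbar (t + 1))
    (ptil : ℕ → Fin p → ℝ)
    (hptil : ∀ t : ℕ, ptil (t + 1) =
      ptil t - (Γ t * φ (t + 1) * W (t + 1)) *ᵥ
        ((φ (t + 1))ᵀ *ᵥ ptil t + (C * F ^ (t + 1)) *ᵥ xtil0)) :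
    ∃ β : ℝ, ∀ t : ℕ, evnorm (ptil t) ≤ β := by
  obtain ⟨βφ, hβφ⟩ := hφbdd
  have hβφ0 : 0 ≤ βφ := (norm_nonneg _).trans (hβφ 0)
  have hx0 : 0 ≤ evnorm xtil0 := norm_nonneg _
  have hreset' : ∀ t, Γ (t + 1) = k₀ • 1 ∨ Γ (t + 1) = rlsCov R (Γ t) (φ (t + 1)) := fun t => by
    rw [hreset t, hbar t, hW t]
    split_ifs
    exacts [.inl rfl, .inr rfl]
  have hptil' : ∀ t, ptil (t + 1) = ptil t - rlsGain R (Γ t) (φ (t + 1)) *ᵥ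
      ((φ (t + 1))ᵀ *ᵥ ptil t + (C * F ^ (t + 1)) *ᵥ xtil0) := fun t => by
    rw [hptil t, hW t]; rfl
  set D := βφ * ‖R⁻¹‖ * (‖C‖ * M * evnorm xtil0)
  have hdist : ∀ t, evnorm ((φ (t + 1) * R⁻¹) *ᵥ (C * F ^ (t + 1)) *ᵥ xtil0) ≤ D * c ^ (t + 1) :=
    fun t => calc
      _ ≤ ‖φ (t + 1)‖ * ‖R⁻¹‖ * (‖C‖ * ‖F ^ (t + 1)‖ * evnorm xtil0) :=
        evnorm_mul_mulVec_mul_mulVec_le _ _ _ _ _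
      _ ≤ βφ * ‖R⁻¹‖ * (‖C‖ * (M * c ^ (t + 1)) * evnorm xtil0) := by
        gcongr
        exacts [hβφ _, hF _]
      _ = D * c ^ (t + 1) := by ring
  have hsum : Summable fun t => D * c ^ (t + 1) :=
    ((summable_nat_add_iff 1).mpr (summable_geometric_of_lt_one hc0 hc1)).mul_left D
  exact ⟨_, fun t => (evnorm_eq_sqrt_dotProduct _).trans_le <|
    sqrt_dotProduct_self_le_of_rls_reset hR (hkmin.trans hk) hΓ0 hreset' hptil' hsum
      (fun t => (evnorm_eq_sqrt_dotProduct _).symm.trans_le (hdist t)) t⟩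

/-- **Theorem 4: boundedness of the parameter estimation error.**
With positive-definite `R`, `0 < k_min < k₀`, a bounded regressor sequence `(φ_t)`, a Schur
stable `F` (`‖Fᵏ‖ ≤ M cᵏ`, `0 ≤ c < 1`), the covariance-resetting RLS covariance `Γ_t` and
gain `W_t = (R + φ_tᵀΓ_{t−1}φ_t)⁻¹`, any solution of
`p̃_{t+1} = p̃_t − Γ_t φ_{t+1} W_{t+1} (φ_{t+1}ᵀ p̃_t + C F^{t+1} x̃₀)` is bounded. -/
theorem stmt13 {p q n : ℕ} (R : Matrix (Fin q) (Fin q) ℝ) (hR : R.PosDef)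
    (kmin k₀ : ℝ) (hkmin : 0 < kmin) (hk : kmin < k₀)
    (φ : ℕ → Matrix (Fin p) (Fin q) ℝ) (hφbdd : ∃ βφ : ℝ, ∀ t : ℕ, ‖φ t‖ ≤ βφ)
    (C : Matrix (Fin q) (Fin n) ℝ) (xtil0 : Fin n → ℝ)
    (F : Matrix (Fin n) (Fin n) ℝ) (M c : ℝ) (hM : 0 ≤ M) (hc0 : 0 ≤ c) (hc1 : c < 1)
    (hF : ∀ k : ℕ, ‖F ^ k‖ ≤ M * c ^ k)
    (Γ Γbar : ℕ → Matrix (Fin p) (Fin p) ℝ) (W : ℕ → Matrix (Fin q) (Fin q) ℝ)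
    (hΓ0 : Γ 0 = k₀ • (1 : Matrix (Fin p) (Fin p) ℝ))
    (hW : ∀ t : ℕ, W (t + 1) = (R + (φ (t + 1))ᵀ * Γ t * φ (t + 1))⁻¹)
    (hbar : ∀ t : ℕ, Γbar (t + 1) = Γ t - Γ t * φ (t + 1) * W (t + 1) * (φ (t + 1))ᵀ * Γ t)
    (hreset : ∀ t : ℕ, Γ (t + 1) =
      if lambdaMin (Γbar (t + 1)) ≤ kmin then k₀ • (1 : Matrix (Fin p) (Fin p) ℝ)
      else Γbar (t + 1))
    (ptil : ℕ → Fin p → ℝ)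
    (hptil : ∀ t : ℕ, ptil (t + 1) =
      ptil t - (Γ t * φ (t + 1) * W (t + 1)) *ᵥ
        ((φ (t + 1))ᵀ *ᵥ ptil t + (C * F ^ (t + 1)) *ᵥ xtil0)) :
    ∃ β : ℝ, ∀ t : ℕ, evnorm (ptil t) ≤ β :=
  stmt13_general R hR kmin k₀ hkmin hk φ hφbdd C xtil0 F M c hc0 hc1 hF Γ Γbar W hΓ0 hW hbar hreset
    ptil hptil
end

section
/- (RLS Lyapunov decrement identity.) Let Γ be a symmetric positive-definite real p×p matrix, R a symmetric positive-definite real q×q matrix, φ a real p×q matrix, and p̃ ∈ ℝᵖ. Define W = (R + φᵀΓφ)⁻¹, the updated inverse covariance Γ₊⁻¹ = Γ⁻¹ + φR⁻¹φᵀ, and the updated error p̃₊ = p̃ − Γφ W φᵀ p̃. Then p̃₊ᵀ Γ₊⁻¹ p̃₊ = p̃ᵀ Γ⁻¹ p̃ − (φᵀp̃)ᵀ W (φᵀp̃). In particular, since W is positive definite, p̃₊ᵀ Γ₊⁻¹ p̃₊ ≤ p̃ᵀ Γ⁻¹ p̃. -/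
/-!
The updated precision `Γ₊ = Γ⁻¹ + φR⁻¹φᵀ` satisfies `Γ₊ (1 - ΓφWφᵀ) = Γ⁻¹`, i.e. `Γ₊ p̃₊ = Γ⁻¹ p̃`.
Hence `p̃₊ᵀ Γ₊ p̃₊ = p̃₊ᵀ Γ⁻¹ p̃ = p̃ᵀ Γ⁻¹ p̃ - (ΓφWφᵀp̃)ᵀ Γ⁻¹ p̃`, and by symmetry of `Γ` the last
term is `(φᵀp̃)ᵀ W (φᵀp̃)`, which is nonnegative because `W` is positive definite.
-/

open Matrix

namespace Matrix

variable {m n α : Type*} [Fintype m] [Fintype n] [DecidableEq m] [DecidableEq n]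

theorem inv_add_mul_inv_mul_mul_one_sub_eq_inv [CommRing α] {Γ : Matrix m m α} {R : Matrix n n α}
    (φ : Matrix m n α) (ψ : Matrix n m α) (hΓ : IsUnit Γ.det) (hR : IsUnit R.det)
    (hS : IsUnit (R + ψ * Γ * φ).det) :
    (Γ⁻¹ + φ * R⁻¹ * ψ) * (1 - Γ * φ * (R + ψ * Γ * φ)⁻¹ * ψ) = Γ⁻¹ := by
  set S := R + ψ * Γ * φ
  have hcancel : φ * R⁻¹ * (S - R - ψ * Γ * φ) * S⁻¹ * ψ = 0 := by simp [S]
  calc (Γ⁻¹ + φ * R⁻¹ * ψ) * (1 - Γ * φ * S⁻¹ * ψ)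
      = Γ⁻¹ + φ * R⁻¹ * (S - R - ψ * Γ * φ) * S⁻¹ * ψ := by
        simp only [Matrix.mul_sub, Matrix.sub_mul, Matrix.add_mul, Matrix.mul_one, Matrix.mul_assoc,
          mul_nonsing_inv_cancel_left (h := hS), nonsing_inv_mul_cancel_left (h := hR),
          nonsing_inv_mul_cancel_left (h := hΓ)]
        abel
    _ = Γ⁻¹ := by rw [hcancel, add_zero]

theorem dotProduct_mulVec_rls_update [CommRing α] {Γ : Matrix m m α} {R : Matrix n n α}
    (φ : Matrix m n α) (x : m → α) (hΓsymm : Γᵀ = Γ) (hΓ : IsUnit Γ.det) (hR : IsUnit R.det)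
    (hS : IsUnit (R + φᵀ * Γ * φ).det) :
    (x - (Γ * φ * (R + φᵀ * Γ * φ)⁻¹) *ᵥ (φᵀ *ᵥ x)) ⬝ᵥ
        ((Γ⁻¹ + φ * R⁻¹ * φᵀ) *ᵥ (x - (Γ * φ * (R + φᵀ * Γ * φ)⁻¹) *ᵥ (φᵀ *ᵥ x))) =
      x ⬝ᵥ (Γ⁻¹ *ᵥ x) - (φᵀ *ᵥ x) ⬝ᵥ ((R + φᵀ * Γ * φ)⁻¹ *ᵥ (φᵀ *ᵥ x)) := by
  set S := R + φᵀ * Γ * φ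
  have hupdate : x - (Γ * φ * S⁻¹) *ᵥ (φᵀ *ᵥ x) = (1 - Γ * φ * S⁻¹ * φᵀ) *ᵥ x := by
    rw [sub_mulVec, one_mulVec, mulVec_mulVec]
  have hgain : (Γ * φ * S⁻¹) *ᵥ (φᵀ *ᵥ x) ⬝ᵥ (Γ⁻¹ *ᵥ x) = (φᵀ *ᵥ x) ⬝ᵥ (S⁻¹ *ᵥ (φᵀ *ᵥ x)) := by
    have hΓφ : Γ * φ = (φᵀ * Γ)ᵀ := by rw [transpose_mul, transpose_transpose, hΓsymm]
    rw [← mulVec_mulVec (M := Γ * φ), hΓφ, dotProduct_comm, dotProduct_transpose_mulVec,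
      mulVec_mulVec (M := φᵀ * Γ), mul_nonsing_inv_cancel_right (h := hΓ), dotProduct_comm]
  rw [hupdate, mulVec_mulVec, inv_add_mul_inv_mul_mul_one_sub_eq_inv φ φᵀ hΓ hR hS, ← hupdate,
    sub_dotProduct, hgain]

omit [DecidableEq m] [DecidableEq n] in
theorem PosDef.add_transpose_mul_mul_s14 {R : Matrix n n ℝ} {Γ : Matrix m m ℝ} (hR : R.PosDef)
    (hΓ : Γ.PosSemidef) (φ : Matrix m n ℝ) : (R + φᵀ * Γ * φ).PosDef := by
  simpa using hR.add_posSemidef (hΓ.conjTranspose_mul_mul_same φ)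

end Matrix

/-- **RLS Lyapunov decrement identity.** For `Γ`, `R` symmetric positive
definite, `φ` a `p × q` matrix, `p̃ ∈ ℝᵖ`, `W = (R + φᵀΓφ)⁻¹`, updated inverse covariance
`Γ₊⁻¹ = Γ⁻¹ + φR⁻¹φᵀ` and updated error `p̃₊ = p̃ − ΓφWφᵀp̃`, one has
`p̃₊ᵀ Γ₊⁻¹ p̃₊ = p̃ᵀ Γ⁻¹ p̃ − (φᵀp̃)ᵀ W (φᵀp̃)`, and in particular
`p̃₊ᵀ Γ₊⁻¹ p̃₊ ≤ p̃ᵀ Γ⁻¹ p̃`. -/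
theorem stmt14 {p q : ℕ} (Γ : Matrix (Fin p) (Fin p) ℝ) (R : Matrix (Fin q) (Fin q) ℝ)
    (hΓ : Γ.PosDef) (hR : R.PosDef) (φ : Matrix (Fin p) (Fin q) ℝ) (ptil : Fin p → ℝ) :
    (ptil - (Γ * φ * (R + φᵀ * Γ * φ)⁻¹) *ᵥ (φᵀ *ᵥ ptil)) ⬝ᵥ
        ((Γ⁻¹ + φ * R⁻¹ * φᵀ) *ᵥ (ptil - (Γ * φ * (R + φᵀ * Γ * φ)⁻¹) *ᵥ (φᵀ *ᵥ ptil))) =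
      ptil ⬝ᵥ (Γ⁻¹ *ᵥ ptil) - (φᵀ *ᵥ ptil) ⬝ᵥ ((R + φᵀ * Γ * φ)⁻¹ *ᵥ (φᵀ *ᵥ ptil)) ∧
    (ptil - (Γ * φ * (R + φᵀ * Γ * φ)⁻¹) *ᵥ (φᵀ *ᵥ ptil)) ⬝ᵥ
        ((Γ⁻¹ + φ * R⁻¹ * φᵀ) *ᵥ (ptil - (Γ * φ * (R + φᵀ * Γ * φ)⁻¹) *ᵥ (φᵀ *ᵥ ptil))) ≤
      ptil ⬝ᵥ (Γ⁻¹ *ᵥ ptil) := by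
  have hS := hR.add_transpose_mul_mul_s14 hΓ.posSemidef φ
  have hΓsymm : Γᵀ = Γ := by simpa using hΓ.isHermitian.eq
  have hidentity := dotProduct_mulVec_rls_update φ ptil hΓsymm hΓ.det_pos.ne'.isUnit
    hR.det_pos.ne'.isUnit hS.det_pos.ne'.isUnit
  have hgain_nonneg : 0 ≤ (φᵀ *ᵥ ptil) ⬝ᵥ ((R + φᵀ * Γ * φ)⁻¹ *ᵥ (φᵀ *ᵥ ptil)) := by
    simpa using hS.inv.posSemidef.dotProduct_mulVec_nonneg (φᵀ *ᵥ ptil)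
  exact ⟨hidentity, by linarith⟩
end

section
/- (Theorem 5, persistence-of-excitation part.) Let R be a symmetric positive-definite real q×q matrix, Γ₀ a symmetric positive-definite real p×p matrix, (φ_t)_{t≥1} a sequence in ℝ^{p×q}, and p̃₀ ∈ ℝᵖ. Define Γ_{t+1} = (Γ_t⁻¹ + φ_{t+1}R⁻¹φ_{t+1}ᵀ)⁻¹, W_{t+1} = (R + φ_{t+1}ᵀΓ_tφ_{t+1})⁻¹, and p̃_{t+1} = p̃_t − Γ_t φ_{t+1} W_{t+1} φ_{t+1}ᵀ p̃_t. Assume the regressor is persistently exciting: λ_min[Σ_{i=1}^t φ_iφ_iᵀ] → ∞ as t → ∞. Then p̃_t → 0 as t → ∞. -/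
open Matrix Filter

/-! The information matrix `Γₜ⁻¹ = Γ₀⁻¹ + ∑ᵢ φᵢR⁻¹φᵢᵀ` accumulates the regressors, and by the
Woodbury identity the error update reads `p̃ₜ₊₁ = Γₜ₊₁Γₜ⁻¹p̃ₜ`, so `Γₜ⁻¹p̃ₜ = Γ₀⁻¹p̃₀ =: c` is
conserved. With `ε > 0` such that `R⁻¹ ≥ ε`, the Loewner bound `Γₜ⁻¹ ≥ ε λ_min(∑ᵢ φᵢφᵢᵀ) =: aₜ`
gives `aₜ‖p̃ₜ‖² ≤ ⟪p̃ₜ, c⟫ ≤ ‖p̃ₜ‖‖c‖`, hence `‖p̃ₜ‖ ≤ ‖c‖ / aₜ → 0` under persistent excitation. -/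

open scoped MatrixOrder

namespace Matrix

variable {n k : Type*} [Fintype n] [Fintype k]

lemma smul_mul_transpose_le_mul_mul_transpose [DecidableEq k]
    {Q : Matrix k k ℝ} {ε : ℝ} (hQ : algebraMap ℝ _ ε ≤ Q) (B : Matrix n k ℝ) :
    ε • (B * Bᵀ) ≤ B * Q * Bᵀ := by
  rw [le_iff, ← conjTranspose_eq_transpose_of_trivial]
  convert (le_iff.mp hQ).mul_mul_conjTranspose_same B using 1
  simp only [Matrix.mul_sub, Matrix.sub_mul, Algebra.algebraMap_eq_smul_one, Matrix.mul_smul,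
    Matrix.smul_mul, Matrix.mul_one]

lemma PosDef.add_mul_inv_mul_transpose [DecidableEq k] {S : Matrix n n ℝ} (hS : S.PosDef)
    {R : Matrix k k ℝ} (hR : R.PosDef) (B : Matrix n k ℝ) : (S + B * R⁻¹ * Bᵀ).PosDef :=
  hS.add_posSemidef <| by
    simpa only [conjTranspose_eq_transpose_of_trivial] using
      hR.inv.posSemidef.mul_mul_conjTranspose_same B

variable [DecidableEq n]

lemma mul_dotProduct_self_le_of_algebraMap_le {A : Matrix n n ℝ} {r : ℝ}
    (h : algebraMap ℝ _ r ≤ A) (x : n → ℝ) : r * (x ⬝ᵥ x) ≤ x ⬝ᵥ (A *ᵥ x) := by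
  have := (le_iff.mp h).dotProduct_mulVec_nonneg x
  rw [star_trivial, Algebra.algebraMap_eq_smul_one, sub_mulVec, smul_mulVec, one_mulVec,
    dotProduct_sub, dotProduct_smul, smul_eq_mul] at this
  linarith

lemma PosDef.inv_inv {A : Matrix n n ℝ} (hA : A.PosDef) : A⁻¹⁻¹ = A :=
  nonsing_inv_nonsing_inv A hA.det_pos.ne'.isUnit

lemma PosDef.exists_pos_algebraMap_le {A : Matrix n n ℝ} (hA : A.PosDef) :
    ∃ r > 0, algebraMap ℝ _ r ≤ A := by
  rcases isEmpty_or_nonempty n with hn | hn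
  · exact ⟨1, one_pos, (Subsingleton.elim _ _).le⟩
  exact (CFC.exists_pos_algebraMap_le_iff hA.isHermitian.isSelfAdjoint).2
    fun _ hx => hA.isStrictlyPositive.spectrum_pos hx

lemma IsHermitian.algebraMap_lambdaMin_le {p : ℕ} {A : Matrix (Fin p) (Fin p) ℝ}
    (hA : A.IsHermitian) : algebraMap ℝ _ (lambdaMin A) ≤ A :=
  (algebraMap_le_iff_le_spectrum hA.isSelfAdjoint).2 fun _ hx =>
    csInf_le A.finite_spectrum.bddBelow hx

lemma norm_toLp_le_of_algebraMap_le {A : Matrix n n ℝ} {a : ℝ} (ha : 0 < a)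
    (hA : algebraMap ℝ _ a ≤ A) (x : n → ℝ) :
    ‖WithLp.toLp 2 x‖ ≤ ‖WithLp.toLp 2 (A *ᵥ x)‖ / a := by
  set v := WithLp.toLp 2 x
  set w := WithLp.toLp 2 (A *ᵥ x)
  have hsq : a * (‖v‖ * ‖v‖) ≤ ‖w‖ * ‖v‖ := calc
    a * (‖v‖ * ‖v‖) = a * (x ⬝ᵥ x) := by
      rw [← real_inner_self_eq_norm_mul_norm, EuclideanSpace.inner_toLp_toLp, star_trivial]
    _ ≤ x ⬝ᵥ (A *ᵥ x) := mul_dotProduct_self_le_of_algebraMap_le hA x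
    _ = inner ℝ w v := by rw [EuclideanSpace.inner_toLp_toLp, star_trivial]
    _ ≤ ‖w‖ * ‖v‖ := real_inner_le_norm w v
  rw [le_div_iff₀ ha]
  rcases (norm_nonneg v).eq_or_lt with h | h
  · rw [← h, zero_mul]; exact norm_nonneg w
  · nlinarith

lemma tendsto_zero_of_mulVec_eq_const {A : ℕ → Matrix n n ℝ} {a : ℕ → ℝ} {x : ℕ → n → ℝ}
    {c : n → ℝ} (hA : ∀ t, algebraMap ℝ _ (a t) ≤ A t) (hx : ∀ t, A t *ᵥ x t = c)
    (ha : Tendsto a atTop atTop) : Tendsto x atTop (nhds 0) := by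
  have hbound : ∀ᶠ t in atTop, ‖WithLp.toLp 2 (x t)‖ ≤ ‖WithLp.toLp 2 c‖ / a t := by
    filter_upwards [ha.eventually_gt_atTop 0] with t hat
    simpa only [hx] using norm_toLp_le_of_algebraMap_le hat (hA t) (x t)
  have hlim : Tendsto (fun t => WithLp.toLp 2 (x t)) atTop (nhds 0) :=
    squeeze_zero_norm' hbound (tendsto_const_nhds.div_atTop ha)
  exact ((PiLp.continuous_ofLp 2 _).tendsto 0).comp hlim

end Matrix

namespace RLS

variable {m k : Type*} [Fintype m] [DecidableEq m] [Fintype k] [DecidableEq k]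
  {R : Matrix k k ℝ} {Γ : ℕ → Matrix m m ℝ} {φ : ℕ → Matrix m k ℝ}

theorem covariance_posDef (hR : R.PosDef) (hΓ0 : (Γ 0).PosDef)
    (hΓ : ∀ t, Γ (t + 1) = ((Γ t)⁻¹ + φ (t + 1) * R⁻¹ * (φ (t + 1))ᵀ)⁻¹) (t : ℕ) :
    (Γ t).PosDef := by
  induction t with
  | zero => exact hΓ0
  | succ t ih => exact hΓ t ▸ (ih.inv.add_mul_inv_mul_transpose hR _).inv

theorem inv_covariance_eq (hR : R.PosDef) (hΓ0 : (Γ 0).PosDef)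
    (hΓ : ∀ t, Γ (t + 1) = ((Γ t)⁻¹ + φ (t + 1) * R⁻¹ * (φ (t + 1))ᵀ)⁻¹) (t : ℕ) :
    (Γ t)⁻¹ = (Γ 0)⁻¹ + ∑ i ∈ Finset.Icc 1 t, φ i * R⁻¹ * (φ i)ᵀ := by
  induction t with
  | zero => simp
  | succ t ih =>
    rw [hΓ t, ((covariance_posDef hR hΓ0 hΓ t).inv.add_mul_inv_mul_transpose hR _).inv_inv,
      ih, Finset.sum_Icc_succ_top (by omega), add_assoc]

theorem covariance_succ_eq_sub (hR : R.PosDef) (hΓ0 : (Γ 0).PosDef)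
    (hΓ : ∀ t, Γ (t + 1) = ((Γ t)⁻¹ + φ (t + 1) * R⁻¹ * (φ (t + 1))ᵀ)⁻¹) (t : ℕ) :
    Γ (t + 1) = Γ t - Γ t * φ (t + 1) * (R + (φ (t + 1))ᵀ * Γ t * φ (t + 1))⁻¹ *
      (φ (t + 1))ᵀ * Γ t := by
  have hΓt := covariance_posDef hR hΓ0 hΓ t
  have hgain : (R + (φ (t + 1))ᵀ * Γ t * φ (t + 1)).PosDef :=
    hR.add_posSemidef <| by
      simpa only [conjTranspose_eq_transpose_of_trivial] using
        hΓt.posSemidef.conjTranspose_mul_mul_same (φ (t + 1))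
  rw [hΓ t, add_mul_mul_inv_eq_sub _ _ _ _ hΓt.inv.isUnit hR.inv.isUnit
    (by rw [hR.inv_inv, hΓt.inv_inv]; exact hgain.isUnit), hR.inv_inv, hΓt.inv_inv]

theorem error_eq_covariance_mulVec (hR : R.PosDef) (hΓ0 : (Γ 0).PosDef)
    (hΓ : ∀ t, Γ (t + 1) = ((Γ t)⁻¹ + φ (t + 1) * R⁻¹ * (φ (t + 1))ᵀ)⁻¹)
    {W : ℕ → Matrix k k ℝ} (hW : ∀ t, W (t + 1) = (R + (φ (t + 1))ᵀ * Γ t * φ (t + 1))⁻¹)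
    {ptil : ℕ → m → ℝ} (hptil : ∀ t, ptil (t + 1) =
      ptil t - (Γ t * φ (t + 1) * W (t + 1)) *ᵥ ((φ (t + 1))ᵀ *ᵥ ptil t)) (t : ℕ) :
    ptil t = Γ t *ᵥ ((Γ 0)⁻¹ *ᵥ ptil 0) := by
  induction t with
  | zero => rw [mulVec_mulVec, mul_nonsing_inv _ hΓ0.det_pos.ne'.isUnit, one_mulVec]
  | succ t ih =>
    generalize (Γ 0)⁻¹ *ᵥ ptil 0 = c at ih ⊢
    rw [hptil t, ih, covariance_succ_eq_sub hR hΓ0 hΓ t, hW t]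
    simp only [sub_mulVec, mulVec_mulVec, Matrix.mul_assoc]

theorem algebraMap_mul_le_inv_covariance (hR : R.PosDef) (hΓ0 : (Γ 0).PosDef)
    (hΓ : ∀ t, Γ (t + 1) = ((Γ t)⁻¹ + φ (t + 1) * R⁻¹ * (φ (t + 1))ᵀ)⁻¹) {ε a : ℝ}
    (hε : 0 ≤ ε) (hεR : algebraMap ℝ _ ε ≤ R⁻¹) (t : ℕ)
    (ha : algebraMap ℝ _ a ≤ ∑ i ∈ Finset.Icc 1 t, φ i * (φ i)ᵀ) :
    algebraMap ℝ _ (ε * a) ≤ (Γ t)⁻¹ :=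
  calc algebraMap ℝ _ (ε * a) = ε • algebraMap ℝ _ a := by
        rw [Algebra.algebraMap_eq_smul_one, Algebra.algebraMap_eq_smul_one, smul_smul]
    _ ≤ ε • ∑ i ∈ Finset.Icc 1 t, φ i * (φ i)ᵀ := smul_le_smul_of_nonneg_left ha hε
    _ = ∑ i ∈ Finset.Icc 1 t, ε • (φ i * (φ i)ᵀ) := Finset.smul_sum ..
    _ ≤ ∑ i ∈ Finset.Icc 1 t, φ i * R⁻¹ * (φ i)ᵀ :=
      Finset.sum_le_sum fun i _ => smul_mul_transpose_le_mul_mul_transpose hεR (φ i)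
    _ ≤ (Γ t)⁻¹ := by
      rw [inv_covariance_eq hR hΓ0 hΓ t]
      exact le_add_of_nonneg_left hΓ0.inv.posSemidef.nonneg

end RLS

/-- **Theorem 5, persistence-of-excitation part.** Along the RLS recursion
`Γ_{t+1} = (Γ_t⁻¹ + φ_{t+1}R⁻¹φ_{t+1}ᵀ)⁻¹`, `W_{t+1} = (R + φ_{t+1}ᵀΓ_tφ_{t+1})⁻¹`,
`p̃_{t+1} = p̃_t − Γ_tφ_{t+1}W_{t+1}φ_{t+1}ᵀp̃_t`, if the regressor is persistently
exciting, i.e. `λ_min[Σ_{i=1}^t φᵢφᵢᵀ] → ∞`, then `p̃_t → 0`. -/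
theorem stmt16 {p q : ℕ} (R : Matrix (Fin q) (Fin q) ℝ) (hR : R.PosDef)
    (Γ : ℕ → Matrix (Fin p) (Fin p) ℝ) (hΓ0 : (Γ 0).PosDef)
    (φ : ℕ → Matrix (Fin p) (Fin q) ℝ)
    (W : ℕ → Matrix (Fin q) (Fin q) ℝ)
    (hΓ : ∀ t : ℕ, Γ (t + 1) = ((Γ t)⁻¹ + φ (t + 1) * R⁻¹ * (φ (t + 1))ᵀ)⁻¹)
    (hW : ∀ t : ℕ, W (t + 1) = (R + (φ (t + 1))ᵀ * Γ t * φ (t + 1))⁻¹)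
    (ptil : ℕ → Fin p → ℝ)
    (hptil : ∀ t : ℕ, ptil (t + 1) =
      ptil t - (Γ t * φ (t + 1) * W (t + 1)) *ᵥ ((φ (t + 1))ᵀ *ᵥ ptil t))
    (hPE : Tendsto
      (fun t : ℕ => lambdaMin (∑ i ∈ Finset.Icc 1 t, φ i * (φ i)ᵀ)) atTop atTop) :
    Tendsto ptil atTop (nhds 0) := by
  obtain ⟨ε, hε, hεR⟩ := hR.inv.exists_pos_algebraMap_le
  refine tendsto_zero_of_mulVec_eq_const (A := fun t => (Γ t)⁻¹)
    (c := (Γ 0)⁻¹ *ᵥ ptil 0) (fun t => ?_) (fun t => ?_) (hPE.const_mul_atTop hε)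
  · have hM : (∑ i ∈ Finset.Icc 1 t, φ i * (φ i)ᵀ).IsHermitian :=
      (Finset.sum_nonneg fun i _ => by
        simpa only [conjTranspose_eq_transpose_of_trivial] using
          (posSemidef_self_mul_conjTranspose (φ i)).nonneg).posSemidef.isHermitian
    exact RLS.algebraMap_mul_le_inv_covariance hR hΓ0 hΓ hε.le hεR t hM.algebraMap_lambdaMin_le
  · rw [RLS.error_eq_covariance_mulVec hR hΓ0 hΓ hW hptil t, mulVec_mulVec,
      nonsing_inv_mul _ (RLS.covariance_posDef hR hΓ0 hΓ t).det_pos.ne'.isUnit, one_mulVec]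
end
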